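/- Let A₁ be a real symmetric n₁×n₁ matrix, A₃ a real symmetric n₂×n₂ matrix, and A₂ a real n₁×n₂ matrix. Let M be the (n₁+n₂)×(n₁+n₂) symmetric block matrix [[A₁, A₂],[A₂ᵀ, A₃]] and let B be the symmetric block matrix [[0, A₂],[A₂ᵀ, 0]]. Then μ₂(B) ≤ μ₂(M) + max(0, −μ_{n₁}(A₁)) + max(0, −μ_{n₂}(A₃)), where μ_{n₁}(A₁) and μ_{n₂}(A₃) denote the smallest eigenvalues of A₁ and A₃ respectively. -/

import Mathlib

/-!
Write `M = B + D` with `D = diag(A₁, A₃)`. Each diagonal block is bounded below, as a quadratic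
form, by its smallest eigenvalue, so `⟪B x, x⟫ ≤ ⟪M x, x⟫ + (c₁ + c₂) ‖x‖²` with
`cᵢ = max 0 (-μ_min)`. This form inequality passes to every eigenvalue (Weyl monotonicity): the
span of the eigenvectors of `B` for its `k` largest eigenvalues and the span of those of `M` for
its `n - k + 1` smallest ones meet by a dimension count, and testing both quadratic forms on a
common nonzero vector gives `μₖ(B) ≤ μₖ(M) + c₁ + c₂`.
-/

open Matrix

open Classical in
/-- The multiset of eigenvalues of a real symmetric matrix (junk value otherwise). -/
noncomputable def eigs {m : Type*} [Fintype m] [DecidableEq m] (A : Matrix m m ℝ) : Multiset ℝ :=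
  if h : A.IsHermitian then Finset.univ.val.map h.eigenvalues
  else Multiset.replicate (Fintype.card m) 0

/-- `mu A i` is the `i`-th largest eigenvalue (1-indexed, so `μ₁ ≥ μ₂ ≥ …`) of the
real symmetric matrix `A`. -/
noncomputable def mu {m : Type*} [Fintype m] [DecidableEq m] (A : Matrix m m ℝ) (i : ℕ) : ℝ :=
  (((eigs A).sort (· ≤ ·)).reverse).getD (i - 1) 0

open Module RealInnerProductSpace WithLp

theorem OrthonormalBasis.repr_eq_zero_of_mem_span {ι E : Type*} [Fintype ι] [DecidableEq ι]
    [NormedAddCommGroup E] [InnerProductSpace ℝ E] (b : OrthonormalBasis ι ℝ E) {s : Set ι}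
    {x : E} (hx : x ∈ Submodule.span ℝ (b '' s)) {i : ι} (hi : i ∉ s) : b.repr x i = 0 := by
  induction hx using Submodule.span_induction with
  | mem y hy =>
    obtain ⟨j, hj, rfl⟩ := hy
    rw [b.repr_self, PiLp.single_apply, if_neg (by rintro rfl; exact hi hj)]
  | zero => simp
  | add y z _ _ hy hz => simp [hy, hz]
  | smul c y _ hy => simp [hy]

theorem OrthonormalBasis.finrank_span_image {ι E : Type*} [Fintype ι] [NormedAddCommGroup E]
    [InnerProductSpace ℝ E] (b : OrthonormalBasis ι ℝ E) (s : Finset ι) :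
    finrank ℝ (Submodule.span ℝ (b '' s)) = s.card := by
  rw [Set.image_eq_range]
  exact (finrank_span_eq_card (b.orthonormal.linearIndependent.comp _ Subtype.val_injective)).trans
    (Fintype.card_coe s)

theorem Submodule.exists_mem_inf_ne_zero_of_finrank_lt {K V : Type*} [DivisionRing K]
    [AddCommGroup V] [Module K V] [FiniteDimensional K V] {s t : Submodule K V}
    (h : finrank K V < finrank K s + finrank K t) : ∃ x ∈ s, x ∈ t ∧ x ≠ 0 := by
  by_contra! h'
  exact h.not_ge (Submodule.finrank_add_finrank_le_of_disjoint (Submodule.disjoint_def.2 h'))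

namespace LinearMap.IsSymmetric

variable {E : Type*} [NormedAddCommGroup E] [InnerProductSpace ℝ E] [FiniteDimensional ℝ E]
  {n : ℕ} (hn : finrank ℝ E = n)

section

variable {T : E →ₗ[ℝ] E} (hT : T.IsSymmetric)

theorem inner_apply_self_eq_sum (x : E) :
    ⟪T x, x⟫ = ∑ i, hT.eigenvalues hn i * (hT.eigenvectorBasis hn).repr x i ^ 2 := by
  rw [← (hT.eigenvectorBasis hn).repr.inner_map_map, PiLp.inner_apply]
  simp only [eigenvectorBasis_apply_self_apply, RCLike.inner_apply, conj_trivial,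
    RCLike.ofReal_real_eq_id, id_eq]
  exact Finset.sum_congr rfl fun i _ => by ring

theorem norm_sq_eq_sum (x : E) : ‖x‖ ^ 2 = ∑ i, (hT.eigenvectorBasis hn).repr x i ^ 2 := by
  rw [← (hT.eigenvectorBasis hn).repr.norm_map, EuclideanSpace.norm_sq_eq]
  simp

theorem inner_apply_self_le {t : ℝ} {x : E}
    (h : ∀ i, (hT.eigenvectorBasis hn).repr x i ≠ 0 → hT.eigenvalues hn i ≤ t) :
    ⟪T x, x⟫ ≤ t * ‖x‖ ^ 2 := by
  rw [hT.inner_apply_self_eq_sum hn, hT.norm_sq_eq_sum hn, Finset.mul_sum]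
  refine Finset.sum_le_sum fun i _ => ?_
  by_cases hi : (hT.eigenvectorBasis hn).repr x i = 0
  · simp [hi]
  · exact mul_le_mul_of_nonneg_right (h i hi) (sq_nonneg _)

theorem le_inner_apply_self {t : ℝ} {x : E}
    (h : ∀ i, (hT.eigenvectorBasis hn).repr x i ≠ 0 → t ≤ hT.eigenvalues hn i) :
    t * ‖x‖ ^ 2 ≤ ⟪T x, x⟫ := by
  rw [hT.inner_apply_self_eq_sum hn, hT.norm_sq_eq_sum hn, Finset.mul_sum]
  refine Finset.sum_le_sum fun i _ => ?_
  by_cases hi : (hT.eigenvectorBasis hn).repr x i = 0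
  · simp [hi]
  · exact mul_le_mul_of_nonneg_right (h i hi) (sq_nonneg _)

end

theorem eigenvalues_le_eigenvalues_add {S T : E →ₗ[ℝ] E} (hS : S.IsSymmetric)
    (hT : T.IsSymmetric) {c : ℝ} (h : ∀ x, ⟪S x, x⟫ ≤ ⟪T x, x⟫ + c * ‖x‖ ^ 2) (k : Fin n) :
    hS.eigenvalues hn k ≤ hT.eigenvalues hn k + c := by
  set bS := hS.eigenvectorBasis hn
  set bT := hT.eigenvectorBasis hn
  have hdim : finrank ℝ E < finrank ℝ (Submodule.span ℝ (bS '' ↑(Finset.Iic k))) +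
      finrank ℝ (Submodule.span ℝ (bT '' ↑(Finset.Ici k))) := by
    rw [bS.finrank_span_image, bT.finrank_span_image, Fin.card_Iic, Fin.card_Ici]
    omega
  obtain ⟨x, hxS, hxT, hx⟩ := Submodule.exists_mem_inf_ne_zero_of_finrank_lt hdim
  have hS_ge : hS.eigenvalues hn k * ‖x‖ ^ 2 ≤ ⟪S x, x⟫ :=
    hS.le_inner_apply_self hn fun i hi => hS.eigenvalues_antitone hn <| by
      by_contra hki
      exact hi (bS.repr_eq_zero_of_mem_span hxS (by simpa using hki))
  have hT_le : ⟪T x, x⟫ ≤ hT.eigenvalues hn k * ‖x‖ ^ 2 :=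
    hT.inner_apply_self_le hn fun i hi => hT.eigenvalues_antitone hn <| by
      by_contra hki
      exact hi (bT.repr_eq_zero_of_mem_span hxT (by simpa using hki))
  refine le_of_mul_le_mul_right ?_ (by positivity : 0 < ‖x‖ ^ 2)
  calc hS.eigenvalues hn k * ‖x‖ ^ 2 ≤ ⟪S x, x⟫ := hS_ge
    _ ≤ ⟪T x, x⟫ + c * ‖x‖ ^ 2 := h x
    _ ≤ (hT.eigenvalues hn k + c) * ‖x‖ ^ 2 := by linarith

end LinearMap.IsSymmetric

section

variable {m : Type*} [Fintype m] [DecidableEq m]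

theorem card_eigs (A : Matrix m m ℝ) : Multiset.card (eigs A) = Fintype.card m := by
  unfold eigs; split <;> simp

theorem mu_eq_zero_of_card_lt {A : Matrix m m ℝ} {i : ℕ} (hi : Fintype.card m < i) :
    mu A i = 0 := by
  unfold mu
  apply List.getD_eq_default
  simp only [List.length_reverse, Multiset.length_sort, card_eigs]
  omega

namespace Matrix.IsHermitian

variable {A : Matrix m m ℝ} (hA : A.IsHermitian)
include hA

theorem eigs_eq : eigs A = (List.ofFn hA.eigenvalues₀ : Multiset ℝ) := by
  rw [eigs, dif_pos hA, ← Fin.univ_val_map, ← Multiset.map_univ_val_equiv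
    (Fintype.equivOfCardEq (Fintype.card_fin _)).symm, Multiset.map_map]
  rfl

theorem reverse_sort_eigs : ((eigs A).sort (· ≤ ·)).reverse = List.ofFn hA.eigenvalues₀ := by
  refine List.Perm.eq_of_sortedGE ?_ hA.eigenvalues₀_antitone.sortedGE_ofFn ?_
  · exact List.sortedGE_reverse.2 (List.sortedLE_iff_pairwise.2 (Multiset.pairwise_sort _ _))
  · rw [← Multiset.coe_eq_coe, Multiset.coe_reverse, Multiset.sort_eq, hA.eigs_eq]

theorem mu_eq_eigenvalues₀ {i : ℕ} (hi : i < Fintype.card m) :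
    mu A (i + 1) = hA.eigenvalues₀ ⟨i, hi⟩ := by
  simp [mu, hA.reverse_sort_eigs, hi]

theorem mul_norm_sq_le_inner_of_le_mu {t : ℝ} (ht : t ≤ mu A (Fintype.card m))
    (x : EuclideanSpace ℝ m) : t * ‖x‖ ^ 2 ≤ ⟪toEuclideanLin A x, x⟫ := by
  refine (isSymmetric_toEuclideanLin_iff.mpr hA).le_inner_apply_self finrank_euclideanSpace
    fun k _ => ht.trans ?_
  have hlast : Fintype.card m - 1 < Fintype.card m := Nat.sub_one_lt_of_lt k.isLt
  calc mu A (Fintype.card m) = hA.eigenvalues₀ ⟨_, hlast⟩ := by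
        rw [← hA.mu_eq_eigenvalues₀ hlast, Nat.sub_add_cancel (by omega)]
    _ ≤ hA.eigenvalues₀ k := hA.eigenvalues₀_antitone (Fin.le_def.2 (by simp; omega))

end Matrix.IsHermitian

theorem mu_le_mu_add {A B : Matrix m m ℝ} (hA : A.IsHermitian) (hB : B.IsHermitian) {c : ℝ}
    (hc : 0 ≤ c) (h : ∀ x, ⟪toEuclideanLin A x, x⟫ ≤ ⟪toEuclideanLin B x, x⟫ + c * ‖x‖ ^ 2)
    (i : ℕ) : mu A (i + 1) ≤ mu B (i + 1) + c := by
  rcases lt_or_ge i (Fintype.card m) with hi | hi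
  · rw [hA.mu_eq_eigenvalues₀ hi, hB.mu_eq_eigenvalues₀ hi]
    exact LinearMap.IsSymmetric.eigenvalues_le_eigenvalues_add finrank_euclideanSpace _ _ h _
  · rw [mu_eq_zero_of_card_lt (by omega), mu_eq_zero_of_card_lt (by omega)]
    linarith

end

section

variable {m n : Type*} [Fintype m] [Fintype n]

theorem EuclideanSpace.norm_sq_sum_type (x : EuclideanSpace ℝ (m ⊕ n)) :
    ‖x‖ ^ 2 = ‖toLp 2 fun i => x (Sum.inl i)‖ ^ 2 + ‖toLp 2 fun j => x (Sum.inr j)‖ ^ 2 := by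
  simp only [EuclideanSpace.norm_sq_eq, Fintype.sum_sum_type]

variable [DecidableEq m] [DecidableEq n]

theorem inner_toEuclideanLin_fromBlocks_apply_self (A : Matrix m m ℝ) (D : Matrix n n ℝ)
    (x : EuclideanSpace ℝ (m ⊕ n)) :
    ⟪toEuclideanLin (fromBlocks A 0 0 D) x, x⟫ =
      ⟪toEuclideanLin A (toLp 2 fun i => x (Sum.inl i)), toLp 2 fun i => x (Sum.inl i)⟫ +
      ⟪toEuclideanLin D (toLp 2 fun j => x (Sum.inr j)), toLp 2 fun j => x (Sum.inr j)⟫ := by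
  simp [PiLp.inner_apply, mulVec, dotProduct, Fintype.sum_sum_type]

theorem mul_norm_sq_le_inner_fromBlocks {A : Matrix m m ℝ} {D : Matrix n n ℝ} {t : ℝ}
    (hA : ∀ y, t * ‖y‖ ^ 2 ≤ ⟪toEuclideanLin A y, y⟫)
    (hD : ∀ y, t * ‖y‖ ^ 2 ≤ ⟪toEuclideanLin D y, y⟫) (x : EuclideanSpace ℝ (m ⊕ n)) :
    t * ‖x‖ ^ 2 ≤ ⟪toEuclideanLin (fromBlocks A 0 0 D) x, x⟫ := by
  rw [inner_toEuclideanLin_fromBlocks_apply_self, EuclideanSpace.norm_sq_sum_type, mul_add]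
  exact add_le_add (hA _) (hD _)

end

theorem stmt3 (n₁ n₂ : ℕ)
    (A₁ : Matrix (Fin n₁) (Fin n₁) ℝ) (A₂ : Matrix (Fin n₁) (Fin n₂) ℝ)
    (A₃ : Matrix (Fin n₂) (Fin n₂) ℝ)
    (h₁ : A₁.IsHermitian) (h₃ : A₃.IsHermitian) :
    mu (Matrix.fromBlocks (0 : Matrix (Fin n₁) (Fin n₁) ℝ) A₂ A₂ᵀ
        (0 : Matrix (Fin n₂) (Fin n₂) ℝ)) 2 ≤
      mu (Matrix.fromBlocks A₁ A₂ A₂ᵀ A₃) 2 + max 0 (-(mu A₁ n₁)) + max 0 (-(mu A₃ n₂)) := by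
  have hA₂ : A₂ᴴ = A₂ᵀ := conjTranspose_eq_transpose_of_trivial A₂
  have hA₂t : A₂ᵀᴴ = A₂ := by rw [conjTranspose_eq_transpose_of_trivial, transpose_transpose]
  have hM := isHermitian_fromBlocks_iff.2 ⟨h₁, hA₂, hA₂t, h₃⟩
  have hB := isHermitian_fromBlocks_iff.2 ⟨isHermitian_zero, hA₂, hA₂t, isHermitian_zero⟩
  generalize hc₁ : max 0 (-(mu A₁ n₁)) = c₁
  generalize hc₂ : max 0 (-(mu A₃ n₂)) = c₂
  have hc₁_nonneg : 0 ≤ c₁ := hc₁ ▸ le_max_left _ _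
  have hc₂_nonneg : 0 ≤ c₂ := hc₂ ▸ le_max_left _ _
  have hA₁_ge : -(c₁ + c₂) ≤ mu A₁ (Fintype.card (Fin n₁)) := by
    rw [Fintype.card_fin]; linarith [hc₁ ▸ le_max_right 0 (-(mu A₁ n₁))]
  have hA₃_ge : -(c₁ + c₂) ≤ mu A₃ (Fintype.card (Fin n₂)) := by
    rw [Fintype.card_fin]; linarith [hc₂ ▸ le_max_right 0 (-(mu A₃ n₂))]
  have hBM : ∀ x, ⟪toEuclideanLin (fromBlocks 0 A₂ A₂ᵀ 0) x, x⟫ ≤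
      ⟪toEuclideanLin (fromBlocks A₁ A₂ A₂ᵀ A₃) x, x⟫ + (c₁ + c₂) * ‖x‖ ^ 2 := by
    intro x
    have hM_eq : fromBlocks A₁ A₂ A₂ᵀ A₃ = fromBlocks 0 A₂ A₂ᵀ 0 + fromBlocks A₁ 0 0 A₃ := by
      simp [fromBlocks_add]
    have hD := mul_norm_sq_le_inner_fromBlocks (h₁.mul_norm_sq_le_inner_of_le_mu hA₁_ge)
      (h₃.mul_norm_sq_le_inner_of_le_mu hA₃_ge) x
    rw [hM_eq, map_add, LinearMap.add_apply, inner_add_left]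
    linarith
  linarith [mu_le_mu_add hB hM (add_nonneg hc₁_nonneg hc₂_nonneg) hBM 1]
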